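/- arXiv:2210.10596 — 5 statements merged into one kernel-verified Lean document; each statement's English description precedes it below -/
import Mathlib

section
/- Let d ≥ 2, x₀ ∈ ℝ^d, v ∈ ℝ^d a unit vector, γ ∈ (0, π/2], and r > 0. Then the set of points of ℝ^d whose distance to the complement of the cone 𝒞_{x₀,v,γ} is greater than r equals the cone translated along its axis: {y ∈ ℝ^d : inf{‖y − z‖ : z ∉ 𝒞_{x₀,v,γ}} > r} = 𝒞_{x₀,v,γ} + (r/sin γ)·v, where S + w denotes the translate {s + w : s ∈ S}. -/
open MeasureTheory Real Filter Set Metric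
open scoped RealInnerProductSpace Pointwise

noncomputable section

/-- The open cone with vertex `x₀`, direction `v`, half-angle `γ`. -/
def cone {d : ℕ} (x₀ v : EuclideanSpace ℝ (Fin d)) (γ : ℝ) :
    Set (EuclideanSpace ℝ (Fin d)) :=
  {y | Real.cos γ * ‖y - x₀‖ < ⟪y - x₀, v⟫}

/-- `A_r(𝒞_{x₀,v,γ})`: the cone translated by `(r / sin γ) • v` along its axis. -/
def coneA {d : ℕ} (x₀ v : EuclideanSpace ℝ (Fin d)) (γ r : ℝ) :
    Set (EuclideanSpace ℝ (Fin d)) :=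
  (fun y => y + (r / Real.sin γ) • v) '' cone x₀ v γ

/-!
Write `y - x₀ = t • v + w` with `w ⊥ v`. The margin `m(y) = sin γ * t - cos γ * ‖w‖` is positive
exactly on the cone, and it is `1`-Lipschitz because `sin γ * t + cos γ * ‖w‖ ≤ ‖y - x₀‖` by
Cauchy–Schwarz in the plane. Stepping from a point `y` of the cone a distance `m(y)` along the unit
vector `cos γ • e - sin γ • v`, where `e` is the direction of `w` (any unit vector orthogonal to `v`
if `w = 0`), lands on the boundary. Hence `m(y)` is the distance
from `y` to the complement, and translating by `(r / sin γ) • v` raises `m` by exactly `r`.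
-/

section coneMargin

variable {E : Type*} [NormedAddCommGroup E] [InnerProductSpace ℝ E] {v : E}

/-- For `‖v‖ = 1` and `0 < γ ≤ π / 2`: positive exactly on the cone with vertex `0`, axis `v` and
half-angle `γ`, where it is the distance to the complement. -/
def coneMargin (v : E) (γ : ℝ) (u : E) : ℝ :=
  sin γ * ⟪u, v⟫ - cos γ * ‖u - ⟪u, v⟫ • v‖

lemma inner_sub_inner_smul_self (hv : ‖v‖ = 1) (u : E) : ⟪u - ⟪u, v⟫ • v, v⟫ = 0 := by
  rw [inner_sub_left, real_inner_smul_left, real_inner_self_eq_norm_sq, hv]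
  ring

lemma norm_sq_eq_inner_sq_add_norm_sub_sq (hv : ‖v‖ = 1) (u : E) :
    ‖u‖ ^ 2 = ⟪u, v⟫ ^ 2 + ‖u - ⟪u, v⟫ • v‖ ^ 2 := by
  have h := norm_sub_sq_real u (⟪u, v⟫ • v)
  rw [real_inner_smul_right, norm_smul, hv, Real.norm_eq_abs, mul_one, sq_abs] at h
  linarith

lemma sub_inner_smul_add_smul_self (hv : ‖v‖ = 1) (u : E) (c : ℝ) :
    u + c • v - ⟪u + c • v, v⟫ • v = u - ⟪u, v⟫ • v := by
  rw [inner_add_left, real_inner_smul_left, real_inner_self_eq_norm_sq, hv, one_pow, mul_one,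
    add_smul]
  abel

lemma sin_mul_inner_add_cos_mul_norm_le (hv : ‖v‖ = 1) (γ : ℝ) (u : E) :
    sin γ * ⟪u, v⟫ + cos γ * ‖u - ⟪u, v⟫ • v‖ ≤ ‖u‖ := by
  have hsq : (sin γ * ⟪u, v⟫ + cos γ * ‖u - ⟪u, v⟫ • v‖) ^ 2 ≤ ‖u‖ ^ 2 := by
    nlinarith [norm_sq_eq_inner_sq_add_norm_sub_sq hv u, sin_sq_add_cos_sq γ,
      sq_nonneg (cos γ * ⟪u, v⟫ - sin γ * ‖u - ⟪u, v⟫ • v‖)]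
  exact (le_abs_self _).trans (abs_le_of_sq_le_sq hsq (norm_nonneg u))

lemma cos_mul_norm_lt_inner_iff (hv : ‖v‖ = 1) {γ : ℝ} (hsin : 0 ≤ sin γ) (hcos : 0 ≤ cos γ)
    (u : E) : cos γ * ‖u‖ < ⟪u, v⟫ ↔ 0 < coneMargin v γ u := by
  have hnorm := norm_sq_eq_inner_sq_add_norm_sub_sq hv u
  rw [coneMargin, sub_pos]
  set t := ⟪u, v⟫
  set s := ‖u - t • v‖
  have hs : 0 ≤ s := norm_nonneg _
  by_cases ht : 0 ≤ t
  · rw [← pow_lt_pow_iff_left₀ (a := cos γ * ‖u‖) (by positivity) ht two_ne_zero,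
      ← pow_lt_pow_iff_left₀ (a := cos γ * s) (by positivity) (by positivity) two_ne_zero]
    constructor <;> intro h <;> nlinarith [sin_sq_add_cos_sq γ]
  · rw [not_le] at ht
    exact iff_of_false (by nlinarith [norm_nonneg u]) (by nlinarith)

lemma coneMargin_sub_coneMargin_le (hv : ‖v‖ = 1) {γ : ℝ} (hcos : 0 ≤ cos γ) (u u' : E) :
    coneMargin v γ u - coneMargin v γ u' ≤ ‖u - u'‖ := by
  have hperp : u - u' - ⟪u - u', v⟫ • v = (u - ⟪u, v⟫ • v) - (u' - ⟪u', v⟫ • v) := by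
    rw [inner_sub_left, sub_smul]
    abel
  have htri := (norm_sub_norm_le (u' - ⟪u', v⟫ • v) (u - ⟪u, v⟫ • v)).trans_eq (norm_sub_rev _ _)
  calc coneMargin v γ u - coneMargin v γ u'
      = sin γ * ⟪u - u', v⟫ - cos γ * (‖u - ⟪u, v⟫ • v‖ - ‖u' - ⟪u', v⟫ • v‖) := by
        rw [coneMargin, coneMargin, inner_sub_left]
        ring
    _ ≤ sin γ * ⟪u - u', v⟫ + cos γ * ‖u - u' - ⟪u - u', v⟫ • v‖ := by
        rw [hperp]
        nlinarith
    _ ≤ ‖u - u'‖ := sin_mul_inner_add_cos_mul_norm_le hv γ (u - u')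

lemma coneMargin_add_smul (hv : ‖v‖ = 1) (γ : ℝ) (u : E) (c : ℝ) :
    coneMargin v γ (u + c • v) = coneMargin v γ u + c * sin γ := by
  rw [coneMargin, coneMargin, sub_inner_smul_add_smul_self hv, inner_add_left,
    real_inner_smul_left, real_inner_self_eq_norm_sq, hv]
  ring

lemma coneMargin_add_smul_of_orthogonal (γ : ℝ) {u e : E} (he : ‖e‖ = 1)
    (hev : ⟪e, v⟫ = 0) (hue : u - ⟪u, v⟫ • v = ‖u - ⟪u, v⟫ • v‖ • e) {b : ℝ} (hb : 0 ≤ b) :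
    coneMargin v γ (u + b • e) = coneMargin v γ u - b * cos γ := by
  have hinner : ⟪u + b • e, v⟫ = ⟪u, v⟫ := by
    rw [inner_add_left, real_inner_smul_left, hev, mul_zero, add_zero]
  have hperp : u + b • e - ⟪u + b • e, v⟫ • v = (‖u - ⟪u, v⟫ • v‖ + b) • e := by
    rw [hinner, add_smul, ← hue]
    abel
  rw [coneMargin, coneMargin, hperp, hinner, norm_smul, he, mul_one, Real.norm_eq_abs,
    abs_of_nonneg (by positivity)]
  ring

lemma exists_norm_eq_one_inner_eq_zero [FiniteDimensional ℝ E] (hE : 2 ≤ Module.finrank ℝ E)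
    (hv : v ≠ 0) : ∃ e : E, ‖e‖ = 1 ∧ ⟪e, v⟫ = 0 := by
  have hrank := (ℝ ∙ v).finrank_add_finrank_orthogonal
  rw [finrank_span_singleton hv] at hrank
  have hne : (ℝ ∙ v)ᗮ ≠ ⊥ := by
    intro h
    rw [h, finrank_bot] at hrank
    omega
  obtain ⟨x, hx, hx0⟩ := Submodule.exists_mem_ne_zero_of_ne_bot hne
  refine ⟨(‖x‖⁻¹ : ℝ) • x, norm_smul_inv_norm hx0, ?_⟩
  rw [real_inner_smul_left, Submodule.mem_orthogonal_singleton_iff_inner_left.1 hx, mul_zero]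

lemma exists_norm_eq_one_inner_eq_zero_and_eq_smul [FiniteDimensional ℝ E]
    (hE : 2 ≤ Module.finrank ℝ E) (hv : ‖v‖ = 1) (u : E) :
    ∃ e : E, ‖e‖ = 1 ∧ ⟪e, v⟫ = 0 ∧ u - ⟪u, v⟫ • v = ‖u - ⟪u, v⟫ • v‖ • e := by
  by_cases hw : u - ⟪u, v⟫ • v = 0
  · obtain ⟨e, he, hev⟩ :=
      exists_norm_eq_one_inner_eq_zero hE (norm_ne_zero_iff.1 (hv ▸ one_ne_zero))
    exact ⟨e, he, hev, by rw [hw, norm_zero, zero_smul]⟩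
  · refine ⟨(‖u - ⟪u, v⟫ • v‖⁻¹ : ℝ) • (u - ⟪u, v⟫ • v), norm_smul_inv_norm hw, ?_, ?_⟩
    · rw [real_inner_smul_left, inner_sub_inner_smul_self hv, mul_zero]
    · rw [smul_inv_smul₀ (norm_ne_zero_iff.2 hw)]

lemma exists_coneMargin_eq_zero_norm_sub_eq [FiniteDimensional ℝ E]
    (hE : 2 ≤ Module.finrank ℝ E) (hv : ‖v‖ = 1) {γ : ℝ} (hcos : 0 ≤ cos γ) {u : E}
    (hu : 0 ≤ coneMargin v γ u) :
    ∃ u' : E, coneMargin v γ u' = 0 ∧ ‖u - u'‖ = coneMargin v γ u := by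
  obtain ⟨e, he, hev, hue⟩ := exists_norm_eq_one_inner_eq_zero_and_eq_smul hE hv u
  set g := coneMargin v γ u
  have hve : ⟪v, e⟫ = 0 := by rw [real_inner_comm, hev]
  have hnormal : ‖sin γ • v - cos γ • e‖ = 1 := by
    have h := norm_sub_sq_eq_norm_sq_add_norm_sq_real
      (by rw [real_inner_smul_left, real_inner_smul_right, hve, mul_zero, mul_zero] :
        ⟪sin γ • v, cos γ • e⟫ = 0)
    rw [norm_smul, norm_smul, hv, he, mul_one, mul_one, Real.norm_eq_abs, Real.norm_eq_abs,
      abs_mul_abs_self, abs_mul_abs_self] at h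
    nlinarith [norm_nonneg (sin γ • v - cos γ • e), sin_sq_add_cos_sq γ]
  refine ⟨u - g • (sin γ • v - cos γ • e), ?_, ?_⟩
  · have hsplit : u - g • (sin γ • v - cos γ • e) = u + (-(g * sin γ)) • v + (g * cos γ) • e := by
      rw [smul_sub, smul_smul, smul_smul, neg_smul]
      abel
    rw [hsplit, coneMargin_add_smul_of_orthogonal γ he hev
        (by rw [sub_inner_smul_add_smul_self hv]; exact hue) (by positivity),
      coneMargin_add_smul hv]
    linear_combination (-g) * sin_sq_add_cos_sq γ
  · rw [sub_sub_cancel, norm_smul, hnormal, mul_one, Real.norm_eq_abs, abs_of_nonneg hu]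

end coneMargin

variable {d : ℕ} {x₀ v : EuclideanSpace ℝ (Fin d)} {γ : ℝ}

lemma mem_cone_iff (hv : ‖v‖ = 1) (hsin : 0 ≤ sin γ) (hcos : 0 ≤ cos γ)
    (y : EuclideanSpace ℝ (Fin d)) : y ∈ cone x₀ v γ ↔ 0 < coneMargin v γ (y - x₀) :=
  cos_mul_norm_lt_inner_iff hv hsin hcos (y - x₀)

lemma infDist_compl_cone_eq_max (hd : 2 ≤ d) (hv : ‖v‖ = 1) (hsin : 0 ≤ sin γ) (hcos : 0 ≤ cos γ)
    (y : EuclideanSpace ℝ (Fin d)) :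
    infDist y (cone x₀ v γ)ᶜ = max (coneMargin v γ (y - x₀)) 0 := by
  have hE : 2 ≤ Module.finrank ℝ (EuclideanSpace ℝ (Fin d)) := by rwa [finrank_euclideanSpace_fin]
  by_cases hy : y ∈ cone x₀ v γ
  · have hpos := (mem_cone_iff hv hsin hcos y).1 hy
    rw [max_eq_left hpos.le]
    apply le_antisymm
    · obtain ⟨u', hu', hdist⟩ := exists_coneMargin_eq_zero_norm_sub_eq hE hv hcos hpos.le
      have hout : u' + x₀ ∉ cone x₀ v γ := by
        rw [mem_cone_iff hv hsin hcos, add_sub_cancel_right, hu']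
        exact lt_irrefl 0
      calc infDist y (cone x₀ v γ)ᶜ ≤ dist y (u' + x₀) := infDist_le_dist_of_mem hout
        _ = coneMargin v γ (y - x₀) := by rw [dist_eq_norm, sub_add_eq_sub_sub_swap, hdist]
    · have hx₀ : x₀ ∈ (cone x₀ v γ)ᶜ := by simp [cone]
      refine (le_infDist ⟨x₀, hx₀⟩).2 fun z hz => ?_
      have hz' : coneMargin v γ (z - x₀) ≤ 0 := not_lt.1 ((mem_cone_iff hv hsin hcos z).not.1 hz)
      have hlip := coneMargin_sub_coneMargin_le hv hcos (y - x₀) (z - x₀)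
      rw [sub_sub_sub_cancel_right, ← dist_eq_norm] at hlip
      linarith
  · rw [infDist_zero_of_mem hy, max_eq_right (not_lt.1 ((mem_cone_iff hv hsin hcos y).not.1 hy))]

lemma coneA_eq_setOf_lt_coneMargin (hv : ‖v‖ = 1) (hsin : 0 < sin γ) (hcos : 0 ≤ cos γ)
    (r : ℝ) : coneA x₀ v γ r = {y | r < coneMargin v γ (y - x₀)} := by
  ext y
  rw [coneA, Set.image_add_right, Set.mem_preimage, mem_cone_iff hv hsin.le hcos,
    Set.mem_ofPred_eq, add_sub_right_comm, ← neg_smul, coneMargin_add_smul hv,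
    neg_mul, div_mul_cancel₀ r hsin.ne', ← sub_eq_add_neg, sub_pos]

/-- For a cone with half-angle `γ ∈ (0, π/2]` and `r > 0`, the set of points
whose distance to the complement of the cone is greater than `r` is the cone translated by
`(r / sin γ) • v` along its axis. -/
theorem cone_infDist_compl_eq_translate {d : ℕ} (hd : 2 ≤ d)
    (x₀ v : EuclideanSpace ℝ (Fin d)) (hv : ‖v‖ = 1)
    (γ : ℝ) (hγ : γ ∈ Set.Ioc 0 (π / 2)) (r : ℝ) (hr : 0 < r) :
    {y : EuclideanSpace ℝ (Fin d) | r < Metric.infDist y (cone x₀ v γ)ᶜ}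
      = coneA x₀ v γ r := by
  have hsin : 0 < sin γ := sin_pos_of_pos_of_lt_pi hγ.1 (hγ.2.trans_lt (by linarith [pi_pos]))
  have hcos : 0 ≤ cos γ := cos_nonneg_of_mem_Icc ⟨by linarith [hγ.1, pi_pos], hγ.2⟩
  ext y
  rw [coneA_eq_setOf_lt_coneMargin hv hsin hcos, Set.mem_ofPred_eq, Set.mem_ofPred_eq,
    infDist_compl_cone_eq_max hd hv hsin.le hcos, lt_max_iff, or_iff_left hr.not_gt]
end
end

section
/- Let d ≥ 1, x₀ ∈ ℝ^d, v ∈ ℝ^d a unit vector, γ ∈ (0, π/2], t > 0, and n, m ∈ ℝ. Then the Minkowski sum A_n(𝒞_{x₀,v,γ}) + t·A_m(𝒞_{v,γ}) = A_{n+tm}(𝒞_{x₀,v,γ}), where S + T := {s + t' : s ∈ S, t' ∈ T} and t·S := {t·s : s ∈ S}. -/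
/-!
Every `A_r(𝒞_{x₀,v,γ})` is the translate `{x₀ + (r / sin γ) • v} + 𝒞_{0,v,γ}`, and translations
pass through Minkowski sums and dilations, so the left side is the translate of
`𝒞_{0,v,γ} + t • 𝒞_{0,v,γ}` by `x₀ + ((n + t m) / sin γ) • v`. For `γ ≤ π / 2` the cone
`𝒞_{0,v,γ}` is convex and closed under positive dilations, hence `𝒞 + t • 𝒞 = 𝒞`.
-/

open MeasureTheory Real Filter Set Metric
open scoped RealInnerProductSpace Pointwise

noncomputable section

theorem ConvexCone.add_smul_self {𝕜 E : Type*} [Field 𝕜] [LinearOrder 𝕜] [IsStrictOrderedRing 𝕜]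
    [AddCommMonoid E] [Module 𝕜 E] (C : ConvexCone 𝕜 E) {t : 𝕜} (ht : 0 < t) :
    (C : Set E) + t • (C : Set E) = C := by
  refine subset_antisymm ?_ fun x hx => ?_
  · rintro _ ⟨x, hx, _, ⟨y, hy, rfl⟩, rfl⟩
    exact C.add_mem hx (C.smul_mem ht hy)
  · have h1t : 0 < 1 + t := by linarith
    -- split `x` in the ratio `1 : t`
    refine ⟨(1 + t)⁻¹ • x, C.smul_mem (inv_pos.2 h1t) hx, t • (1 + t)⁻¹ • x,
      smul_mem_smul_set (C.smul_mem (inv_pos.2 h1t) hx), ?_⟩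
    change (1 + t)⁻¹ • x + t • (1 + t)⁻¹ • x = x
    rw [smul_smul, ← add_smul, ← one_add_mul, mul_inv_cancel₀ h1t.ne', one_smul]

section

variable {d : ℕ}

theorem cone_eq_singleton_add (x₀ v : EuclideanSpace ℝ (Fin d)) (γ : ℝ) :
    cone x₀ v γ = {x₀} + cone 0 v γ := by
  ext y
  simp [Set.singleton_add, Set.image_add_left, cone, neg_add_eq_sub]

theorem coneA_eq_singleton_add (x₀ v : EuclideanSpace ℝ (Fin d)) (γ r : ℝ) :
    coneA x₀ v γ r = {x₀ + (r / Real.sin γ) • v} + cone 0 v γ := by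
  rw [coneA, cone_eq_singleton_add, Set.singleton_add, Set.singleton_add, Set.image_image]
  simp only [add_right_comm]

def coneConvexCone (v : EuclideanSpace ℝ (Fin d)) {γ : ℝ} (hγ : 0 ≤ Real.cos γ) :
    ConvexCone ℝ (EuclideanSpace ℝ (Fin d)) where
  carrier := cone 0 v γ
  smul_mem' c hc y hy := by
    simp only [cone, sub_zero, Set.mem_ofPred_eq] at hy ⊢
    rw [norm_smul, real_inner_smul_left, Real.norm_of_nonneg hc.le, mul_left_comm]
    exact mul_lt_mul_of_pos_left hy hc
  add_mem' y hy z hz := by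
    simp only [cone, sub_zero, Set.mem_ofPred_eq] at hy hz ⊢
    calc Real.cos γ * ‖y + z‖ ≤ Real.cos γ * ‖y‖ + Real.cos γ * ‖z‖ := by
          rw [← mul_add]; exact mul_le_mul_of_nonneg_left (norm_add_le y z) hγ
      _ < ⟪y, v⟫ + ⟪z, v⟫ := add_lt_add hy hz
      _ = ⟪y + z, v⟫ := (inner_add_left y z v).symm

end

theorem coneA_add_smul_coneA_general {d : ℕ}
    (x₀ v : EuclideanSpace ℝ (Fin d))
    (γ : ℝ) (hγ : γ ∈ Set.Ioc 0 (π / 2)) (t : ℝ) (ht : 0 < t) (n m : ℝ) :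
    coneA x₀ v γ n + t • coneA (0 : EuclideanSpace ℝ (Fin d)) v γ m
      = coneA x₀ v γ (n + t * m) := by
  have hcos : 0 ≤ Real.cos γ := Real.cos_nonneg_of_mem_Icc ⟨by linarith [hγ.1, pi_pos], hγ.2⟩
  have hK : cone 0 v γ + t • cone 0 v γ = cone 0 v γ :=
    (coneConvexCone v hcos).add_smul_self ht
  simp only [coneA_eq_singleton_add, zero_add]
  rw [smul_add, Set.smul_set_singleton, add_add_add_comm, Set.singleton_add_singleton, hK,
    add_div, mul_div_assoc, add_smul, mul_smul, add_assoc]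

/-- Minkowski sum identity
`A_n(𝒞_{x₀,v,γ}) + t • A_m(𝒞_{v,γ}) = A_{n+tm}(𝒞_{x₀,v,γ})`. -/
theorem coneA_add_smul_coneA {d : ℕ} (hd : 1 ≤ d)
    (x₀ v : EuclideanSpace ℝ (Fin d)) (hv : ‖v‖ = 1)
    (γ : ℝ) (hγ : γ ∈ Set.Ioc 0 (π / 2)) (t : ℝ) (ht : 0 < t) (n m : ℝ) :
    coneA x₀ v γ n + t • coneA (0 : EuclideanSpace ℝ (Fin d)) v γ m
      = coneA x₀ v γ (n + t * m) :=
  coneA_add_smul_coneA_general x₀ v γ hγ t ht n m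
end
end

section
/- Let d ≥ 2, x₀ ∈ ℝ^d, v ∈ ℝ^d a unit vector, γ ∈ (0, π/2], t ≥ 0, and n, m, r ∈ ℝ. Define the outgoing phase-space set W_{n,m;out} := A_n(𝒞_{x₀,v,γ}) × A_m(𝒞_{v,γ}) ⊆ ℝ^d × ℝ^d and the classically allowed region at time t, 𝔠_t(W_{n,m;out}) := {a + t·b : (a,b) ∈ W_{n,m;out}}. Then for every z ∈ 𝔠_t(W_{n,m;out}) and every w ∈ ℝ^d with w ∉ A_r(𝒞_{x₀,v,γ}), one has ‖z − w‖ ≥ n + m·t − r. -/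
open MeasureTheory Real Filter Set Metric
open scoped RealInnerProductSpace Pointwise

noncomputable section

/-!
For `0 < γ ≤ π / 2` the closed cone `K = {y | cos γ * ‖y‖ ≤ ⟪y, v⟫}` is closed under nonnegative
scaling, `𝒞_{x₀,v,γ} + K ⊆ 𝒞_{x₀,v,γ}`, and `K` contains the closed ball of radius `s` around
`(s / sin γ) • v`. If `‖z - w‖ < s := n + m t - r` for `z = a + t • b`, then
`w - (r / sin γ) • v = a' + t • b' + ((s / sin γ) • v - (z - w))`, where `a' ∈ 𝒞_{x₀,v,γ}` and
`b' ∈ 𝒞_{v,γ}` are the points under `a` and `b`; so it lies in `𝒞_{x₀,v,γ}`, i.e.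
`w ∈ A_r(𝒞_{x₀,v,γ})`.
-/

def closedCone {E : Type*} [NormedAddCommGroup E] [InnerProductSpace ℝ E] (v : E) (γ : ℝ) :
    Set E :=
  {y | Real.cos γ * ‖y‖ ≤ ⟪y, v⟫}

section ClosedCone

variable {E : Type*} [NormedAddCommGroup E] [InnerProductSpace ℝ E] {v : E} {γ : ℝ}

lemma smul_mem_closedCone {t : ℝ} (ht : 0 ≤ t) {y : E} (hy : y ∈ closedCone v γ) :
    t • y ∈ closedCone v γ := by
  simp only [closedCone, Set.mem_ofPred_eq, norm_smul, Real.norm_of_nonneg ht,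
    real_inner_smul_left] at hy ⊢
  nlinarith

lemma cos_sq_mul_le_sq_sub {c S ρ τ N : ℝ} (hcS : c ^ 2 + S ^ 2 = 1) (hS : 0 ≤ S)
    (hτN : |τ| ≤ N) (hNρ : N ≤ S * ρ) :
    c ^ 2 * (ρ ^ 2 - 2 * ρ * τ + N ^ 2) ≤ (ρ - τ) ^ 2 := by
  have hS1 : S ≤ 1 := by nlinarith
  have hSτ : S * τ ≤ N := by nlinarith [le_abs_self τ, neg_abs_le τ, abs_nonneg τ]
  have hsq : (N - S * τ) ^ 2 ≤ (S * (ρ - τ)) ^ 2 := by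
    apply pow_le_pow_left₀ (by linarith) (by linarith)
  -- `(N - S τ)² = c² (N² - τ²) + (S N - τ)²`: Cauchy–Schwarz for `(c, S)` and `(√(N² - τ²), τ)`.
  rw [show c ^ 2 = 1 - S ^ 2 by linarith]
  nlinarith [sq_nonneg (S * N - τ)]

lemma sub_mem_closedCone_of_norm_le (hv : ‖v‖ = 1) (hsin : 0 < Real.sin γ) {s : ℝ} {u : E}
    (hu : ‖u‖ ≤ s) : (s / Real.sin γ) • v - u ∈ closedCone v γ := by
  set ρ := s / Real.sin γ
  have hNρ : ‖u‖ ≤ Real.sin γ * ρ := by rwa [mul_div_cancel₀ _ hsin.ne']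
  have hτN : |⟪u, v⟫| ≤ ‖u‖ := by simpa [hv] using abs_real_inner_le_norm u v
  have hinner : ⟪ρ • v - u, v⟫ = ρ - ⟪u, v⟫ := by
    rw [inner_sub_left, real_inner_smul_left, real_inner_self_eq_norm_sq, hv]
    ring
  have hnorm : ‖ρ • v - u‖ ^ 2 = ρ ^ 2 - 2 * ρ * ⟪u, v⟫ + ‖u‖ ^ 2 := by
    rw [norm_sub_sq_real, norm_smul, real_inner_smul_left, hv, real_inner_comm, Real.norm_eq_abs,
      mul_one, sq_abs]
    ring
  have hsq : (Real.cos γ * ‖ρ • v - u‖) ^ 2 ≤ (ρ - ⟪u, v⟫) ^ 2 := by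
    rw [mul_pow, hnorm]
    exact cos_sq_mul_le_sq_sub (Real.cos_sq_add_sin_sq γ) hsin.le hτN hNρ
  have hρτ : 0 ≤ ρ - ⟪u, v⟫ := by
    nlinarith [le_abs_self ⟪u, v⟫, Real.sin_le_one γ, norm_nonneg u]
  show Real.cos γ * ‖ρ • v - u‖ ≤ ⟪ρ • v - u, v⟫
  rw [hinner]
  exact le_of_sq_le_sq hsq hρτ

end ClosedCone

section Cone

variable {d : ℕ} {x₀ v : EuclideanSpace ℝ (Fin d)} {γ : ℝ}

lemma cone_zero_subset_closedCone : cone 0 v γ ⊆ closedCone v γ := fun y hy => by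
  simp only [cone, Set.mem_ofPred_eq, sub_zero] at hy
  exact hy.le

lemma add_mem_cone_of_mem_closedCone (hcos : 0 ≤ Real.cos γ) {c p : EuclideanSpace ℝ (Fin d)}
    (hc : c ∈ cone x₀ v γ) (hp : p ∈ closedCone v γ) : c + p ∈ cone x₀ v γ := by
  simp only [cone, closedCone, Set.mem_ofPred_eq] at hc hp ⊢
  have htri : Real.cos γ * ‖c - x₀ + p‖ ≤ Real.cos γ * ‖c - x₀‖ + Real.cos γ * ‖p‖ := by
    rw [← mul_add]
    exact mul_le_mul_of_nonneg_left (norm_add_le _ _) hcos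
  rw [add_sub_right_comm, inner_add_left]
  linarith

end Cone

theorem dist_classical_region_outgoing_general {d : ℕ}
    (x₀ v : EuclideanSpace ℝ (Fin d)) (hv : ‖v‖ = 1)
    (γ : ℝ) (hγ : γ ∈ Set.Ioc 0 (π / 2)) (t : ℝ) (ht : 0 ≤ t) (n m r : ℝ) :
    ∀ a ∈ coneA x₀ v γ n, ∀ b ∈ coneA (0 : EuclideanSpace ℝ (Fin d)) v γ m,
      ∀ w : EuclideanSpace ℝ (Fin d), w ∉ coneA x₀ v γ r →
        n + m * t - r ≤ ‖(a + t • b) - w‖ := by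
  rintro _ ⟨a, ha, rfl⟩ _ ⟨b, hb, rfl⟩ w hw
  have hsin : 0 < Real.sin γ :=
    Real.sin_pos_of_pos_of_lt_pi hγ.1 (hγ.2.trans_lt (by linarith [Real.pi_pos]))
  have hcos : 0 ≤ Real.cos γ := Real.cos_nonneg_of_mem_Icc ⟨by linarith [hγ.1, Real.pi_pos], hγ.2⟩
  by_contra! hclose
  set u := (a + (n / Real.sin γ) • v) + t • (b + (m / Real.sin γ) • v) - w
  have hdecomp : w - (r / Real.sin γ) • v
      = (a + t • b) + (((n + m * t - r) / Real.sin γ) • v - u) := by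
    simp only [u]
    module
  refine hw ⟨w - (r / Real.sin γ) • v, ?_, sub_add_cancel _ _⟩
  rw [hdecomp]
  refine add_mem_cone_of_mem_closedCone hcos (add_mem_cone_of_mem_closedCone hcos ha ?_) ?_
  · exact smul_mem_closedCone ht (cone_zero_subset_closedCone hb)
  · exact sub_mem_closedCone_of_norm_le hv hsin hclose.le

/-- the classically allowed region at time `t` of the outgoing phase-space set
`W_{n,m;out} = A_n(𝒞_{x₀,v,γ}) × A_m(𝒞_{v,γ})` stays at distance at least `n + m·t − r`
from the complement of `A_r(𝒞_{x₀,v,γ})`. -/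
theorem dist_classical_region_outgoing {d : ℕ} (hd : 2 ≤ d)
    (x₀ v : EuclideanSpace ℝ (Fin d)) (hv : ‖v‖ = 1)
    (γ : ℝ) (hγ : γ ∈ Set.Ioc 0 (π / 2)) (t : ℝ) (ht : 0 ≤ t) (n m r : ℝ) :
    ∀ a ∈ coneA x₀ v γ n, ∀ b ∈ coneA (0 : EuclideanSpace ℝ (Fin d)) v γ m,
      ∀ w : EuclideanSpace ℝ (Fin d), w ∉ coneA x₀ v γ r →
        n + m * t - r ≤ ‖(a + t • b) - w‖ :=
  dist_classical_region_outgoing_general x₀ v hv γ hγ t ht n m r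
end
end

section
/- Let d ≥ 2 and let {𝒞_i}_{i∈I} be a family of open cones 𝒞_i = 𝒞_{x_i,v_i,γ_i} in ℝ^d with all half-angles γ_i ∈ (0, π/2]. Let t ≥ 0 and n, m, r ∈ ℝ. Define 𝒲_{n,m;out} := ⋃_{i∈I} A_n(𝒞_{x_i,v_i,γ_i}) × A_m(𝒞_{v_i,γ_i}) ⊆ ℝ^d × ℝ^d, 𝒜_r := ⋃_{i∈I} A_r(𝒞_{x_i,v_i,γ_i}), and 𝔠_t(𝒲_{n,m;out}) := {a + t·b : (a,b) ∈ 𝒲_{n,m;out}}. Then for every z ∈ 𝔠_t(𝒲_{n,m;out}) and every w ∈ ℝ^d with w ∉ 𝒜_r, one has ‖z − w‖ ≥ n + m·t − r. -/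
open MeasureTheory Real Filter Set Metric
open scoped RealInnerProductSpace Pointwise

noncomputable section

/-!
Write `σ = sin γ`. The ball of radius `α` about `(α / σ) • v` is tangent to the cone `𝒞_{0,v,γ}`,
so it lies in its closure, and since the cone is convex (`γ ≤ π/2`), `𝒞_{v,γ}` plus its closure
is `𝒞_{v,γ}`. Hence `A_α(𝒞)` together with its `α`-neighbourhood lies in `𝒞`, i.e. `A_α(𝒞)`
keeps distance `> α` from the complement of `𝒞`. The same convexity gives
`A_n(𝒞_{x,v,γ}) + t • A_m(𝒞_{v,γ}) ⊆ A_{n+mt}(𝒞_{x,v,γ})`, and shifting by `(r / σ) • v`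
turns the distance from `A_{n+mt}(𝒞)` to the complement of `A_r(𝒞)` into that from
`A_{n+mt-r}(𝒞)` to the complement of `𝒞`.
-/

namespace ClassicalRegion

variable {d : ℕ} {x₀ v a b p q : EuclideanSpace ℝ (Fin d)} {γ : ℝ}

def closedCone (v : EuclideanSpace ℝ (Fin d)) (γ : ℝ) : Set (EuclideanSpace ℝ (Fin d)) :=
  {y | Real.cos γ * ‖y‖ ≤ ⟪y, v⟫}

lemma mem_cone_zero_iff : a ∈ cone 0 v γ ↔ Real.cos γ * ‖a‖ < ⟪a, v⟫ := by
  simp only [cone, sub_zero, mem_ofPred_eq]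

lemma mem_coneA_iff {r : ℝ} {y : EuclideanSpace ℝ (Fin d)} :
    y ∈ coneA x₀ v γ r ↔ y - (r / Real.sin γ) • v - x₀ ∈ cone 0 v γ := by
  constructor
  · rintro ⟨y₀, hy₀, rfl⟩
    simpa [cone] using hy₀
  · intro hy
    exact ⟨y - (r / Real.sin γ) • v, by simpa [cone] using hy, sub_add_cancel _ _⟩

lemma cone_zero_subset_closedCone : cone 0 v γ ⊆ closedCone v γ :=
  fun _ ha => (mem_cone_zero_iff.1 ha).le

lemma smul_mem_closedCone {t : ℝ} (ht : 0 ≤ t) (hb : b ∈ closedCone v γ) :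
    t • b ∈ closedCone v γ := by
  change Real.cos γ * ‖t • b‖ ≤ ⟪t • b, v⟫
  rw [norm_smul, real_inner_smul_left, Real.norm_of_nonneg ht, mul_left_comm]
  exact mul_le_mul_of_nonneg_left hb ht

lemma add_mem_cone_zero (hc : 0 ≤ Real.cos γ) (ha : a ∈ cone 0 v γ)
    (hb : b ∈ closedCone v γ) : a + b ∈ cone 0 v γ := by
  rw [mem_cone_zero_iff] at ha ⊢
  calc Real.cos γ * ‖a + b‖ ≤ Real.cos γ * ‖a‖ + Real.cos γ * ‖b‖ := by
        rw [← mul_add]; exact mul_le_mul_of_nonneg_left (norm_add_le a b) hc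
    _ < ⟪a, v⟫ + ⟪b, v⟫ := add_lt_add_of_lt_of_le ha hb
    _ = ⟪a + b, v⟫ := (inner_add_left a b v).symm

lemma closedBall_subset_closedCone (hv : ‖v‖ = 1) (hσ : 0 < Real.sin γ) {α : ℝ} (hα : 0 ≤ α) :
    closedBall ((α / Real.sin γ) • v) α ⊆ closedCone v γ := by
  intro y hy
  set σ := Real.sin γ
  set c := Real.cos γ
  set h := α / σ
  set e := y - h • v
  have hy_eq : y = h • v + e := by simp only [e, add_sub_cancel]
  have he : ‖e‖ ≤ h * σ := by
    rw [div_mul_cancel₀ α hσ.ne']; exact mem_closedBall_iff_norm.1 hy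
  have hea : |⟪e, v⟫| ≤ ‖e‖ := by simpa [hv] using abs_real_inner_le_norm e v
  have hinner : ⟪y, v⟫ = h + ⟪e, v⟫ := by
    rw [hy_eq, inner_add_left, real_inner_smul_left, real_inner_self_eq_norm_sq, hv]; ring
  have hh : 0 ≤ h := div_nonneg hα hσ.le
  have hnorm : ‖y‖ ^ 2 = h ^ 2 + 2 * h * ⟪e, v⟫ + ‖e‖ ^ 2 := by
    rw [hy_eq, norm_add_sq_real, norm_smul, real_inner_smul_left, hv, Real.norm_of_nonneg hh,
      real_inner_comm]
    ring
  have hσ1 : σ ≤ 1 := Real.sin_le_one γ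
  have hpyth : σ ^ 2 + c ^ 2 = 1 := Real.sin_sq_add_cos_sq γ
  have hpos : 0 ≤ h + ⟪e, v⟫ := by
    nlinarith [neg_abs_le ⟪e, v⟫, mul_le_mul_of_nonneg_left hσ1 hh]
  -- `(h + ⟪e,v⟫)² - c² ‖y‖² ≥ (σ² h + ⟪e,v⟫)²`, using `‖e‖ ≤ σ h`
  have hsq : (c * ‖y‖) ^ 2 ≤ (h + ⟪e, v⟫) ^ 2 := by
    have he2 : ‖e‖ ^ 2 ≤ (h * σ) ^ 2 := pow_le_pow_left₀ (norm_nonneg e) he 2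
    have hc2 : c ^ 2 * ‖e‖ ^ 2 ≤ c ^ 2 * (h * σ) ^ 2 :=
      mul_le_mul_of_nonneg_left he2 (sq_nonneg c)
    rw [mul_pow, hnorm]
    nlinarith [sq_nonneg (σ ^ 2 * h + ⟪e, v⟫)]
  change c * ‖y‖ ≤ ⟪y, v⟫
  rw [hinner]
  exact (abs_le_of_sq_le_sq' hsq hpos).2

lemma lt_norm_add_smul_sub (hv : ‖v‖ = 1) (hσ : 0 < Real.sin γ) (hc : 0 ≤ Real.cos γ)
    (hp : p ∈ cone 0 v γ) (hq : q ∉ cone 0 v γ) (α : ℝ) :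
    α < ‖p + (α / Real.sin γ) • v - q‖ := by
  by_contra! hle
  have hα : 0 ≤ α := (norm_nonneg _).trans hle
  have hball : q - p ∈ closedBall ((α / Real.sin γ) • v) α := by
    rwa [mem_closedBall_iff_norm, ← norm_neg, neg_sub, sub_sub_eq_add_sub, add_comm _ p]
  apply hq
  simpa using add_mem_cone_zero hc hp (closedBall_subset_closedCone hv hσ hα hball)

lemma add_smul_mem_coneA (hc : 0 ≤ Real.cos γ) {n m t : ℝ} (ht : 0 ≤ t)
    (ha : a ∈ coneA x₀ v γ n) (hb : b ∈ coneA 0 v γ m) :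
    a + t • b ∈ coneA x₀ v γ (n + m * t) := by
  rw [mem_coneA_iff] at ha hb ⊢
  have hb' := smul_mem_closedCone ht (cone_zero_subset_closedCone hb)
  convert add_mem_cone_zero hc ha hb' using 1
  module

lemma lt_norm_sub_of_mem_coneA_of_not_mem_coneA (hv : ‖v‖ = 1) (hσ : 0 < Real.sin γ)
    (hc : 0 ≤ Real.cos γ) {s r : ℝ} {y w : EuclideanSpace ℝ (Fin d)}
    (hy : y ∈ coneA x₀ v γ s) (hw : w ∉ coneA x₀ v γ r) :
    s - r < ‖y - w‖ := by
  rw [mem_coneA_iff] at hy hw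
  convert lt_norm_add_smul_sub hv hσ hc hy hw (s - r) using 2
  module

end ClassicalRegion

open ClassicalRegion in
theorem dist_classical_region_outgoing_family_general {d : ℕ}
    {I : Type*} (x v : I → EuclideanSpace ℝ (Fin d)) (γ : I → ℝ)
    (hv : ∀ i, ‖v i‖ = 1) (hγ : ∀ i, γ i ∈ Set.Ioc 0 (π / 2))
    (t : ℝ) (ht : 0 ≤ t) (n m r : ℝ) :
    ∀ z ∈ {z : EuclideanSpace ℝ (Fin d) |
        ∃ ab ∈ ⋃ i, (coneA (x i) (v i) (γ i) n) ×ˢ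
          (coneA (0 : EuclideanSpace ℝ (Fin d)) (v i) (γ i) m),
          z = ab.1 + t • ab.2},
      ∀ w : EuclideanSpace ℝ (Fin d), w ∉ ⋃ i, coneA (x i) (v i) (γ i) r →
        n + m * t - r ≤ ‖z - w‖ := by
  rintro _ ⟨⟨a, b⟩, hab, rfl⟩ w hw
  obtain ⟨i, ha, hb⟩ := mem_iUnion.1 hab
  have hσ : 0 < Real.sin (γ i) :=
    sin_pos_of_pos_of_lt_pi (hγ i).1 ((hγ i).2.trans_lt (by linarith [pi_pos]))
  have hc : 0 ≤ Real.cos (γ i) :=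
    cos_nonneg_of_mem_Icc ⟨by linarith [(hγ i).1, pi_pos], (hγ i).2⟩
  exact (lt_norm_sub_of_mem_coneA_of_not_mem_coneA (hv i) hσ hc
    (add_smul_mem_coneA hc ht ha hb) fun hwi => hw (mem_iUnion.2 ⟨i, hwi⟩)).le

/-- family version of the distance estimate: the classically allowed region at
time `t` of `𝒲_{n,m;out} = ⋃ᵢ A_n(𝒞ᵢ) × A_m(𝒞_{vᵢ,γᵢ})` stays at distance at least
`n + m·t − r` from the complement of `𝒜_r = ⋃ᵢ A_r(𝒞ᵢ)`. -/
theorem dist_classical_region_outgoing_family {d : ℕ} (hd : 2 ≤ d)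
    {I : Type*} (x v : I → EuclideanSpace ℝ (Fin d)) (γ : I → ℝ)
    (hv : ∀ i, ‖v i‖ = 1) (hγ : ∀ i, γ i ∈ Set.Ioc 0 (π / 2))
    (t : ℝ) (ht : 0 ≤ t) (n m r : ℝ) :
    ∀ z ∈ {z : EuclideanSpace ℝ (Fin d) |
        ∃ ab ∈ ⋃ i, (coneA (x i) (v i) (γ i) n) ×ˢ
          (coneA (0 : EuclideanSpace ℝ (Fin d)) (v i) (γ i) m),
          z = ab.1 + t • ab.2},
      ∀ w : EuclideanSpace ℝ (Fin d), w ∉ ⋃ i, coneA (x i) (v i) (γ i) r →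
        n + m * t - r ≤ ‖z - w‖ :=
  dist_classical_region_outgoing_family_general x v γ hv hγ t ht n m r
end
end

section
/- Work in ℝ². Let v₁, v₂ be unit vectors with v₁ ≠ v₂ and v₁ ≠ −v₂, let v_* := (v₁ + v₂)/‖v₁ + v₂‖, and let γ ∈ (0, π/2) be the half-angle between v₁ and v₂, i.e. cos(2γ) = ⟨v₁, v₂⟩. Let r⃗₁ := {t·v₁ : t ≥ 0} and r⃗₂ := {t·v₂ : t ≥ 0}. Then for every r > 0, both cones 𝒞_{(r/sin γ)v_*, v_*, γ} and 𝒞_{−(r/sin γ)v_*, −v_*, π−γ} are contained in {y ∈ ℝ² : inf{‖y − z‖ : z ∈ r⃗₁ ∪ r⃗₂} ≥ r}, the set of points at distance at least r from the union of the two rays. -/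
/-!
Let `c = cos γ`, `s = sin γ` and `v⋆` the unit bisector, so that `⟪vᵢ, v⋆⟫ = c` for both rays.

For the inner cone, the vector `v⋆ - c • vᵢ` has length `s` and is orthogonal to `vᵢ`, and
Cauchy–Schwarz makes it pair nonnegatively with `y - (r / s) • v⋆` for `y` in the inner cone.
Pairing `y - t • vᵢ` with it therefore gives at least `(r / s) ⟪v⋆, v⋆ - c • vᵢ⟫ = r s`, while the
pairing is at most `s ‖y - t • vᵢ‖`.

The outer cone, translated by `(r / s) • v⋆`, lies in `K = {w | ⟪w, v⋆⟫ ≤ c‖w‖}`, the complement of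
the open cone around `v⋆`. This set is stable under subtracting points of the rays, and every point
of `K` lies at distance at least `q s` from `q • v⋆` for `q ≥ 0`; take `q = r / s`.
-/

open MeasureTheory Real Filter Set Metric
open scoped RealInnerProductSpace Pointwise

noncomputable section

lemma mem_cone_neg_iff {d : ℕ} {x v y : EuclideanSpace ℝ (Fin d)} {γ : ℝ} :
    y ∈ cone (-x) (-v) (π - γ) ↔ ⟪y + x, v⟫ < cos γ * ‖y + x‖ := by
  simp only [cone, mem_ofPred_eq, cos_pi_sub, sub_neg_eq_add, inner_neg_right, neg_mul,
    neg_lt_neg_iff]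

lemma le_infDist_union_rays {E : Type*} [SeminormedAddCommGroup E] [Module ℝ E]
    {y v₁ v₂ : E} {r : ℝ}
    (h₁ : ∀ t : ℝ, 0 ≤ t → r ≤ ‖y - t • v₁‖) (h₂ : ∀ t : ℝ, 0 ≤ t → r ≤ ‖y - t • v₂‖) :
    r ≤ infDist y ({z | ∃ t : ℝ, 0 ≤ t ∧ z = t • v₁} ∪ {z | ∃ t : ℝ, 0 ≤ t ∧ z = t • v₂}) := by
  refine (le_infDist ⟨0, .inl ⟨0, le_rfl, (zero_smul ℝ v₁).symm⟩⟩).2 ?_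
  rintro _ (⟨t, ht, rfl⟩ | ⟨t, ht, rfl⟩) <;> rw [dist_eq_norm]
  exacts [h₁ t ht, h₂ t ht]

section InnerProductSpace

variable {E : Type*} [NormedAddCommGroup E] [InnerProductSpace ℝ E]

lemma norm_add_and_inner_bisector_of_inner_eq_cos_two_mul {v₁ v₂ : E} {γ : ℝ}
    (h₁ : ‖v₁‖ = 1) (h₂ : ‖v₂‖ = 1) (h : ⟪v₁, v₂⟫ = cos (2 * γ)) (hc : 0 < cos γ) :
    ‖v₁ + v₂‖ = 2 * cos γ ∧ ⟪v₁, ‖v₁ + v₂‖⁻¹ • (v₁ + v₂)⟫ = cos γ := by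
  have hsq : ‖v₁ + v₂‖ ^ 2 = (2 * cos γ) ^ 2 := by
    rw [norm_add_sq_real, h₁, h₂, h, cos_two_mul]; ring
  have hnorm : ‖v₁ + v₂‖ = 2 * cos γ := (sq_eq_sq₀ (norm_nonneg _) (by positivity)).1 hsq
  refine ⟨hnorm, ?_⟩
  rw [real_inner_smul_right, inner_add_right, real_inner_self_eq_norm_sq, h₁, h, cos_two_mul,
    hnorm]
  field_simp
  ring

lemma norm_sub_cos_smul_eq_sin {u v : E} {γ : ℝ} (hu : ‖u‖ = 1) (hv : ‖v‖ = 1)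
    (huv : ⟪u, v⟫ = cos γ) (hs : 0 < sin γ) : ‖v - cos γ • u‖ = sin γ := by
  refine (sq_eq_sq₀ (norm_nonneg _) hs.le).1 ?_
  rw [norm_sub_sq_real, real_inner_smul_right, real_inner_comm, huv, norm_smul, hu, hv,
    Real.norm_eq_abs, mul_one, sq_abs, sin_sq]
  ring

lemma inner_sub_cos_smul_nonneg {u v w : E} {γ : ℝ} (hu : ‖u‖ = 1) (hc : 0 ≤ cos γ)
    (hw : cos γ * ‖w‖ ≤ ⟪w, v⟫) : 0 ≤ ⟪w, v - cos γ • u⟫ := by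
  have hwu : ⟪w, u⟫ ≤ ‖w‖ := by simpa [hu] using real_inner_le_norm w u
  rw [inner_sub_right, real_inner_smul_right]
  nlinarith [mul_le_mul_of_nonneg_left hwu hc]

lemma le_norm_sub_smul_of_cos_mul_norm_le_inner {u v y : E} {γ r t : ℝ} (hu : ‖u‖ = 1)
    (hv : ‖v‖ = 1) (huv : ⟪u, v⟫ = cos γ) (hc : 0 ≤ cos γ) (hs : 0 < sin γ)
    (hy : cos γ * ‖y - (r / sin γ) • v‖ ≤ ⟪y - (r / sin γ) • v, v⟫) :
    r ≤ ‖y - t • u‖ := by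
  set n := v - cos γ • u
  have hun : ⟪u, n⟫ = 0 := by
    rw [inner_sub_right, real_inner_smul_right, real_inner_self_eq_norm_sq, hu]; simp [huv]
  have hvn : ⟪v, n⟫ = sin γ ^ 2 := by
    rw [inner_sub_right, real_inner_smul_right, real_inner_self_eq_norm_sq, hv,
      real_inner_comm, huv, sin_sq]
    ring
  have hwn := inner_sub_cos_smul_nonneg (v := v) hu hc hy
  refine le_of_mul_le_mul_right ?_ hs
  calc r * sin γ = (r / sin γ) * ⟪v, n⟫ := by rw [hvn]; field_simp
    _ ≤ ⟪y - (r / sin γ) • v, n⟫ + (r / sin γ) * ⟪v, n⟫ := by linarith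
    _ = ⟪y - t • u, n⟫ := by
      simp only [inner_sub_left, real_inner_smul_left, hun]; ring
    _ ≤ ‖y - t • u‖ * ‖n‖ := real_inner_le_norm _ _
    _ = ‖y - t • u‖ * sin γ := by rw [norm_sub_cos_smul_eq_sin hu hv huv hs]

lemma inner_sub_smul_le_of_inner_le {u v w : E} {c t : ℝ} (hu : ‖u‖ = 1)
    (huv : ⟪u, v⟫ = c) (hc : 0 ≤ c) (ht : 0 ≤ t) (hw : ⟪w, v⟫ ≤ c * ‖w‖) :
    ⟪w - t • u, v⟫ ≤ c * ‖w - t • u‖ := by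
  have hnorm : ‖w‖ ≤ ‖w - t • u‖ + t := by
    simpa [norm_smul, hu, abs_of_nonneg ht] using norm_le_norm_sub_add w (t • u)
  rw [inner_sub_left, real_inner_smul_left, huv]
  nlinarith [mul_le_mul_of_nonneg_left hnorm hc]

lemma mul_sin_le_norm_sub_smul {v x : E} {γ q : ℝ} (hv : ‖v‖ = 1) (hq : 0 ≤ q)
    (hx : ⟪x, v⟫ ≤ cos γ * ‖x‖) : q * sin γ ≤ ‖x - q • v‖ := by
  refine le_of_sq_le_sq ?_ (norm_nonneg _)
  have hsq : ‖x - q • v‖ ^ 2 = ‖x‖ ^ 2 - 2 * q * ⟪x, v⟫ + q ^ 2 := by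
    rw [norm_sub_sq_real, real_inner_smul_right, norm_smul, hv, Real.norm_eq_abs, mul_one, sq_abs]
    ring
  rw [hsq]
  nlinarith [mul_le_mul_of_nonneg_left hx (by positivity : 0 ≤ 2 * q),
    sq_nonneg (‖x‖ - q * cos γ), sin_sq_add_cos_sq γ]

lemma le_norm_sub_smul_of_inner_le_cos_mul_norm {u v y : E} {γ r t : ℝ} (hu : ‖u‖ = 1)
    (hv : ‖v‖ = 1) (huv : ⟪u, v⟫ = cos γ) (hc : 0 ≤ cos γ) (hs : 0 < sin γ) (hr : 0 ≤ r)
    (ht : 0 ≤ t) (hy : ⟪y + (r / sin γ) • v, v⟫ ≤ cos γ * ‖y + (r / sin γ) • v‖) :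
    r ≤ ‖y - t • u‖ := by
  have hout := inner_sub_smul_le_of_inner_le hu huv hc ht hy
  calc r = r / sin γ * sin γ := by field_simp
    _ ≤ ‖y + (r / sin γ) • v - t • u - (r / sin γ) • v‖ :=
      mul_sin_le_norm_sub_smul hv (by positivity) hout
    _ = ‖y - t • u‖ := by congr 1; abel

end InnerProductSpace

theorem broken_subspace_cones_subset_general {v₁ v₂ : EuclideanSpace ℝ (Fin 2)}
    (h1 : ‖v₁‖ = 1) (h2 : ‖v₂‖ = 1)
    (γ : ℝ) (hγ : γ ∈ Set.Ioo 0 (π / 2)) (hcos : Real.cos (2 * γ) = ⟪v₁, v₂⟫)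
    (r : ℝ) (hr : 0 < r) :
    cone ((r / Real.sin γ) • (‖v₁ + v₂‖⁻¹ • (v₁ + v₂))) (‖v₁ + v₂‖⁻¹ • (v₁ + v₂)) γ
        ⊆ {y : EuclideanSpace ℝ (Fin 2) | r ≤ Metric.infDist y
            ({z | ∃ t : ℝ, 0 ≤ t ∧ z = t • v₁} ∪ {z | ∃ t : ℝ, 0 ≤ t ∧ z = t • v₂})} ∧
    cone (-((r / Real.sin γ) • (‖v₁ + v₂‖⁻¹ • (v₁ + v₂)))) (-(‖v₁ + v₂‖⁻¹ • (v₁ + v₂))) (π - γ)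
        ⊆ {y : EuclideanSpace ℝ (Fin 2) | r ≤ Metric.infDist y
            ({z | ∃ t : ℝ, 0 ≤ t ∧ z = t • v₁} ∪ {z | ∃ t : ℝ, 0 ≤ t ∧ z = t • v₂})} := by
  obtain ⟨hγ0, hγ2⟩ := hγ
  have hc : 0 < cos γ := cos_pos_of_mem_Ioo ⟨by linarith [pi_pos], hγ2⟩
  have hs : 0 < sin γ := sin_pos_of_pos_of_lt_pi hγ0 (by linarith [pi_pos])
  obtain ⟨hnorm, hv₁⟩ :=
    norm_add_and_inner_bisector_of_inner_eq_cos_two_mul h1 h2 hcos.symm hc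
  have hv₂ : ⟪v₂, ‖v₁ + v₂‖⁻¹ • (v₁ + v₂)⟫ = cos γ := by
    rw [add_comm v₁ v₂]
    exact (norm_add_and_inner_bisector_of_inner_eq_cos_two_mul h2 h1
      (by rw [real_inner_comm, hcos]) hc).2
  have hv : ‖‖v₁ + v₂‖⁻¹ • (v₁ + v₂)‖ = 1 :=
    norm_smul_inv_norm (norm_pos_iff.1 (by rw [hnorm]; positivity))
  constructor
  · intro y hy
    exact le_infDist_union_rays
      (fun t _ => le_norm_sub_smul_of_cos_mul_norm_le_inner h1 hv hv₁ hc.le hs hy.le)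
      (fun t _ => le_norm_sub_smul_of_cos_mul_norm_le_inner h2 hv hv₂ hc.le hs hy.le)
  · intro y hy
    have hy' := (mem_cone_neg_iff.1 hy).le
    exact le_infDist_union_rays
      (fun t ht => le_norm_sub_smul_of_inner_le_cos_mul_norm h1 hv hv₁ hc.le hs hr.le ht hy')
      (fun t ht => le_norm_sub_smul_of_inner_le_cos_mul_norm h2 hv hv₂ hc.le hs hr.le ht hy')

/-- broken subspace geometry in ℝ²: both cones
`𝒞_{(r/sin γ)v_*, v_*, γ}` and `𝒞_{−(r/sin γ)v_*, −v_*, π−γ}` are contained in the set of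
points at distance at least `r` from the union of the two rays `ℝ≥0·v₁ ∪ ℝ≥0·v₂`. -/
theorem broken_subspace_cones_subset {v₁ v₂ : EuclideanSpace ℝ (Fin 2)}
    (h1 : ‖v₁‖ = 1) (h2 : ‖v₂‖ = 1) (hne : v₁ ≠ v₂) (hne' : v₁ ≠ -v₂)
    (γ : ℝ) (hγ : γ ∈ Set.Ioo 0 (π / 2)) (hcos : Real.cos (2 * γ) = ⟪v₁, v₂⟫)
    (r : ℝ) (hr : 0 < r) :
    cone ((r / Real.sin γ) • (‖v₁ + v₂‖⁻¹ • (v₁ + v₂))) (‖v₁ + v₂‖⁻¹ • (v₁ + v₂)) γ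
        ⊆ {y : EuclideanSpace ℝ (Fin 2) | r ≤ Metric.infDist y
            ({z | ∃ t : ℝ, 0 ≤ t ∧ z = t • v₁} ∪ {z | ∃ t : ℝ, 0 ≤ t ∧ z = t • v₂})} ∧
    cone (-((r / Real.sin γ) • (‖v₁ + v₂‖⁻¹ • (v₁ + v₂)))) (-(‖v₁ + v₂‖⁻¹ • (v₁ + v₂))) (π - γ)
        ⊆ {y : EuclideanSpace ℝ (Fin 2) | r ≤ Metric.infDist y
            ({z | ∃ t : ℝ, 0 ≤ t ∧ z = t • v₁} ∪ {z | ∃ t : ℝ, 0 ≤ t ∧ z = t • v₂})} :=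
  broken_subspace_cones_subset_general h1 h2 γ hγ hcos r hr
end
end
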